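/- Let u be C² near a boundary point of a domain, H its n × n symmetric Hessian with eigenvalues λ₁, …, λₙ satisfying ∑ᵢ arctan λᵢ ≥ h > (n−2)π/2, and let λ'₁, …, λ'_{n−1} be the eigenvalues of the upper-left (n−1)×(n−1) block of H. Then ∑_{α=1}^{n−1} arctan λ'_α ≥ ∑_{i=1}^n arctan λᵢ − arctan(H_{nn}). -/

import Mathlib

/-!
By Schur's theorem, for every orthogonal `W` the diagonal of `W H Wᵀ` lies in the convex hull of
the permutations of the eigenvalues of `H`; choosing `W` to diagonalise the upper-left block makes
this diagonal `(λ'₁, …, λ'ₘ, Hₙₙ)`. It therefore suffices that `{x : s ≤ ∑ arctan xᵢ}` is convex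
for `s > (n - 2)π/2`. By induction on `n`, the strict version of this set is the strict epigraph
of `φ y = tan (s - ∑ arctan yᵢ)` over the strict set of dimension `n - 1` at level `s - π/2`.
Along the line `y + t d` one has `φ'' = 2 (1 + φ²) (φ (∑ cᵢ)² + ∑ yᵢ cᵢ²)` with
`cᵢ = dᵢ / (1 + yᵢ²)`. This is nonnegative because the quadratic form `∑ uᵢ cᵢ²` is nonnegative
on `{∑ cᵢ = 0}` as soon as `∑ arctan uᵢ > (N - 2)π/2`: then at most one `uᵢ` is negative, and
Cauchy–Schwarz together with the subadditivity of `arctan` on `[0, ∞)` controls it.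
-/

open Real Finset Matrix

theorem arctan_add_le_add_arctan {x y : ℝ} (hx : 0 ≤ x) (hy : 0 ≤ y) :
    arctan (x + y) ≤ arctan x + arctan y := by
  rcases lt_or_ge (x * y) 1 with hxy | hxy
  · rw [arctan_add hxy]
    exact arctan_strictMono.monotone (le_div_self (by positivity) (by linarith)
      (by nlinarith [mul_nonneg hx hy]))
  · have hx0 : 0 < x := lt_of_le_of_ne hx (by rintro rfl; norm_num at hxy)
    have : π / 2 - arctan x ≤ arctan y := by
      rw [← arctan_inv_of_pos hx0]
      exact arctan_strictMono.monotone (by rw [inv_le_iff_one_le_mul₀' hx0]; exact hxy)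
    linarith [arctan_lt_pi_div_two (x + y)]

theorem arctan_sum_le_sum_arctan {ι : Type*} {s : Finset ι} {x : ι → ℝ}
    (hx : ∀ i ∈ s, 0 ≤ x i) : arctan (∑ i ∈ s, x i) ≤ ∑ i ∈ s, arctan (x i) :=
  le_sum_of_subadditive_on_pred arctan (0 ≤ ·) arctan_zero.le (fun _ _ => arctan_add_le_add_arctan)
    (fun _ _ => add_nonneg) x hx

theorem sum_arctan_le_card_mul {ι : Type*} [Fintype ι] (x : ι → ℝ) :
    ∑ i, arctan (x i) ≤ Fintype.card ι * (π / 2) := by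
  simpa using sum_le_card_nsmul univ _ _ fun i _ => (arctan_lt_pi_div_two (x i)).le

theorem lt_arctan_iff_tan_lt {a x : ℝ} (ha : a ∈ Set.Ioo (-(π / 2)) (π / 2)) :
    a < arctan x ↔ tan a < x := by
  conv_lhs => rw [← arctan_tan ha.1 ha.2]
  exact arctan_lt_arctan_iff

theorem sum_mul_sq_nonneg_of_sum_arctan {ι : Type*} [Fintype ι] {u c : ι → ℝ}
    (hu : ((Fintype.card ι : ℝ) - 2) * (π / 2) < ∑ i, arctan (u i)) (hc : ∑ i, c i = 0) :
    0 ≤ ∑ i, u i * c i ^ 2 := by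
  classical
  by_cases hnonneg : ∀ i, 0 ≤ u i
  · exact sum_nonneg fun i _ => mul_nonneg (hnonneg i) (sq_nonneg _)
  push Not at hnonneg
  obtain ⟨j, hj⟩ := hnonneg
  set s := univ.erase j
  have hj_mem : j ∈ univ := mem_univ j
  -- with `θ i = π/2 - arctan (u i) > 0`, the hypothesis says `∑_{i ≠ j} θ i < π/2 + arctan (u j)`
  have hθ_pos : ∀ i, 0 < π / 2 - arctan (u i) := fun i => by linarith [arctan_lt_pi_div_two (u i)]
  have hθ_sum : ∑ i ∈ s, (π / 2 - arctan (u i)) < π / 2 + arctan (u j) := by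
    have htotal : ∑ i, (π / 2 - arctan (u i)) = Fintype.card ι * (π / 2) - ∑ i, arctan (u i) := by
      rw [sum_sub_distrib, sum_const, card_univ, nsmul_eq_mul]
    linarith [add_sum_erase univ (fun i => π / 2 - arctan (u i)) hj_mem]
  have harctan_j : arctan (u j) < 0 := arctan_lt_zero.mpr hj
  have hpos : ∀ i ∈ s, 0 < u i := fun i hi =>
    arctan_pos.mp (by linarith [single_le_sum (fun k _ => (hθ_pos k).le) hi])
  have hinv : ∑ i ∈ s, (u i)⁻¹ < (-u j)⁻¹ := by
    refine arctan_lt_arctan_iff.mp (lt_of_le_of_lt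
      (arctan_sum_le_sum_arctan fun i hi => (inv_pos.mpr (hpos i hi)).le) ?_)
    rw [arctan_inv_of_pos (neg_pos.mpr hj), arctan_neg,
      sum_congr rfl fun i hi => arctan_inv_of_pos (hpos i hi)]
    linarith
  have hcs : (∑ i ∈ s, c i) ^ 2 ≤ (∑ i ∈ s, u i * c i ^ 2) * ∑ i ∈ s, (u i)⁻¹ :=
    sum_sq_le_sum_mul_sum_of_sq_le_mul s (fun i hi => by have := hpos i hi; positivity)
      (fun i hi => (inv_pos.mpr (hpos i hi)).le)
      (fun i hi => by rw [mul_right_comm, mul_inv_cancel₀ (hpos i hi).ne', one_mul])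
  have hcj : c j = -∑ i ∈ s, c i := by linarith [add_sum_erase univ c hj_mem]
  rw [← add_sum_erase univ _ hj_mem, hcj]
  have hQ : 0 ≤ ∑ i ∈ s, u i * c i ^ 2 :=
    sum_nonneg fun i hi => mul_nonneg (hpos i hi).le (sq_nonneg _)
  have hR : -u j * ∑ i ∈ s, (u i)⁻¹ ≤ 1 := by
    have := mul_lt_mul_of_pos_left hinv (neg_pos.mpr hj)
    rw [mul_inv_cancel₀ (neg_pos.mpr hj).ne'] at this
    exact this.le
  nlinarith [mul_le_mul_of_nonneg_left hcs (neg_pos.mpr hj).le, mul_le_mul_of_nonneg_right hR hQ]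

theorem convexOn_of_convexOn_segments {E : Type*} [AddCommGroup E] [Module ℝ E] {D : Set E}
    {f : E → ℝ} (hD : Convex ℝ D)
    (h : ∀ x ∈ D, ∀ y ∈ D, ConvexOn ℝ (Set.Icc 0 1) fun t : ℝ => f (x + t • (y - x))) :
    ConvexOn ℝ D f := by
  refine ⟨hD, fun x hx y hy a b ha hb hab => ?_⟩
  have := (h x hx y hy).2 (Set.left_mem_Icc.mpr zero_le_one) (Set.right_mem_Icc.mpr zero_le_one)
    ha hb hab
  simp only [smul_eq_mul, mul_zero, mul_one, zero_add, zero_smul, add_zero, one_smul,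
    add_sub_cancel] at this
  rw [smul_eq_mul, smul_eq_mul]
  convert this using 2
  rw [eq_sub_of_add_eq hab]
  module

theorem convexOn_tan_comp {S : Set ℝ} (hS : Convex ℝ S) {θ θ' θ'' : ℝ → ℝ}
    (hθ : ∀ t ∈ S, θ t ∈ Set.Ioo (-(π / 2)) (π / 2))
    (hθ' : ∀ t ∈ S, HasDerivAt θ (θ' t) t) (hθ'' : ∀ t ∈ S, HasDerivAt θ' (θ'' t) t)
    (hnonneg : ∀ t ∈ S, 0 ≤ 2 * tan (θ t) * θ' t ^ 2 + θ'' t) :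
    ConvexOn ℝ S fun t => tan (θ t) := by
  have hcos : ∀ t ∈ S, cos (θ t) ≠ 0 := fun t ht => (cos_pos_of_mem_Ioo (hθ t ht)).ne'
  have hderiv : ∀ t ∈ S, HasDerivAt (fun t => tan (θ t)) ((1 + tan (θ t) ^ 2) * θ' t) t := by
    intro t ht
    have := (hasDerivAt_tan (hcos t ht)).comp t (hθ' t ht)
    rwa [one_div, ← inv_one_add_tan_sq (hcos t ht), inv_inv] at this
  have hderiv2 : ∀ t ∈ S, HasDerivAt (fun t => (1 + tan (θ t) ^ 2) * θ' t)
      ((1 + tan (θ t) ^ 2) * (2 * tan (θ t) * θ' t ^ 2 + θ'' t)) t := by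
    intro t ht
    refine ((((hderiv t ht).fun_pow 2).const_add 1).fun_mul (hθ'' t ht)).congr_deriv ?_
    push_cast
    ring
  exact convexOn_of_hasDerivWithinAt2_nonneg hS
    (fun t ht => (hderiv t ht).continuousAt.continuousWithinAt)
    (fun t ht => (hderiv t (interior_subset ht)).hasDerivWithinAt)
    (fun t ht => (hderiv2 t (interior_subset ht)).hasDerivWithinAt)
    (fun t ht => mul_nonneg (by positivity) (hnonneg t (interior_subset ht)))

theorem hasDerivAt_arctan_add_mul (a d t : ℝ) :
    HasDerivAt (fun t => arctan (a + t * d)) (d / (1 + (a + t * d) ^ 2)) t :=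
  ((hasDerivAt_arctan _).comp t ((hasDerivAt_mul_const d).const_add a)).congr_deriv (by ring)

theorem hasDerivAt_div_one_add_sq_add_mul (a d t : ℝ) :
    HasDerivAt (fun t => d / (1 + (a + t * d) ^ 2))
      (-(2 * (a + t * d) * (d / (1 + (a + t * d) ^ 2)) ^ 2)) t := by
  have hden : HasDerivAt (fun t => 1 + (a + t * d) ^ 2) (2 * (a + t * d) * d) t :=
    ((((hasDerivAt_mul_const d).const_add a).fun_pow 2).const_add 1).congr_deriv (by norm_num)
  refine ((hasDerivAt_const t d).fun_div hden (by positivity)).congr_deriv ?_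
  field_simp
  ring

theorem tan_mul_sq_sum_add_sum_mul_sq_nonneg {ι : Type*} [Fintype ι] {u c : ι → ℝ} {θ : ℝ}
    (hθ : θ ∈ Set.Ioo (-(π / 2)) (π / 2))
    (hu : ((Fintype.card ι : ℝ) - 1) * (π / 2) < θ + ∑ i, arctan (u i)) :
    0 ≤ tan θ * (∑ i, c i) ^ 2 + ∑ i, u i * c i ^ 2 := by
  have := sum_mul_sq_nonneg_of_sum_arctan (u := fun o : Option ι => o.elim (tan θ) u)
    (c := fun o => o.elim (-∑ i, c i) c)
    (by simp only [Fintype.sum_option, Option.elim, Fintype.card_option, arctan_tan hθ.1 hθ.2]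
        push_cast; linarith)
    (by simp [Fintype.sum_option])
  simpa [Fintype.sum_option] using this

theorem convexOn_tan_sub_sum_arctan {ι : Type*} [Fintype ι] {s : ℝ}
    (hs : ((Fintype.card ι : ℝ) - 1) * (π / 2) < s)
    (hD : Convex ℝ {y : ι → ℝ | s - π / 2 < ∑ i, arctan (y i)}) :
    ConvexOn ℝ {y : ι → ℝ | s - π / 2 < ∑ i, arctan (y i)}
      fun y => tan (s - ∑ i, arctan (y i)) := by
  refine convexOn_of_convexOn_segments hD fun x hx y hy => ?_
  have hmem := fun t (ht : t ∈ Set.Icc (0 : ℝ) 1) => hD.add_smul_sub_mem hx hy ht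
  simp only [Set.mem_ofPred_eq, Pi.add_apply, Pi.smul_apply, Pi.sub_apply, smul_eq_mul] at hmem ⊢
  have hθ : ∀ t ∈ Set.Icc (0 : ℝ) 1,
      s - ∑ i, arctan (x i + t * (y i - x i)) ∈ Set.Ioo (-(π / 2)) (π / 2) := fun t ht =>
    ⟨by linarith [sum_arctan_le_card_mul fun i => x i + t * (y i - x i)], by linarith [hmem t ht]⟩
  refine convexOn_tan_comp (convex_Icc 0 1) hθ
    (θ' := fun t => -∑ i, (y i - x i) / (1 + (x i + t * (y i - x i)) ^ 2))
    (θ'' := fun t => ∑ i, 2 * (x i + t * (y i - x i)) *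
      ((y i - x i) / (1 + (x i + t * (y i - x i)) ^ 2)) ^ 2)
    (fun t _ => ?_) (fun t _ => ?_) (fun t ht => ?_)
  · exact (HasDerivAt.fun_sum fun i _ => hasDerivAt_arctan_add_mul _ _ t).const_sub s
  · exact (HasDerivAt.fun_sum fun i _ => hasDerivAt_div_one_add_sq_add_mul _ _ t).fun_neg
      |>.congr_deriv (by simp [sum_neg_distrib])
  · have := tan_mul_sq_sum_add_sum_mul_sq_nonneg (hθ t ht) (u := fun i => x i + t * (y i - x i))
      (c := fun i => (y i - x i) / (1 + (x i + t * (y i - x i)) ^ 2)) (by linarith)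
    rw [neg_sq]
    simp only [mul_assoc, ← mul_sum] at this ⊢
    linarith

theorem convex_setOf_lt_sum_arctan :
    ∀ (n : ℕ) {s : ℝ}, ((n : ℝ) - 2) * (π / 2) < s →
      Convex ℝ {x : Fin n → ℝ | s < ∑ i, arctan (x i)}
  | 0, _, _ => Set.subsingleton_of_subsingleton.convex
  | k + 1, s, hs => by
    push_cast at hs
    have hD := convex_setOf_lt_sum_arctan k (s := s - π / 2) (by linarith)
    have hφ := convexOn_tan_sub_sum_arctan (by rw [Fintype.card_fin]; linarith) hD
    suffices {x : Fin (k + 1) → ℝ | s < ∑ i, arctan (x i)} =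
        (LinearMap.funLeft ℝ ℝ Fin.castSucc).prod (LinearMap.proj (Fin.last k)) ⁻¹'
          {p | p.1 ∈ {y | s - π / 2 < ∑ i, arctan (y i)} ∧ tan (s - ∑ i, arctan (p.1 i)) < p.2} by
      rw [this]
      exact hφ.convex_strict_epigraph.linear_preimage _
    ext x
    change s < _ ↔ s - π / 2 < ∑ i : Fin k, arctan (x i.castSucc) ∧
      tan (s - ∑ i : Fin k, arctan (x i.castSucc)) < x (Fin.last k)
    rw [Fin.sum_univ_castSucc]
    have hlow : -(π / 2) < s - ∑ i : Fin k, arctan (x i.castSucc) := by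
      have := sum_arctan_le_card_mul fun i : Fin k => x i.castSucc
      rw [Fintype.card_fin] at this
      linarith
    constructor
    · intro h
      have hlt : s - ∑ i : Fin k, arctan (x i.castSucc) < arctan (x (Fin.last k)) := by linarith
      have hup := hlt.trans (arctan_lt_pi_div_two _)
      exact ⟨by linarith, (lt_arctan_iff_tan_lt ⟨hlow, hup⟩).mp hlt⟩
    · rintro ⟨hup, htan⟩
      linarith [(lt_arctan_iff_tan_lt ⟨hlow, by linarith⟩).mpr htan]

theorem convex_setOf_le_sum_arctan (n : ℕ) {s : ℝ} (hs : ((n : ℝ) - 2) * (π / 2) < s) :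
    Convex ℝ {x : Fin n → ℝ | s ≤ ∑ i, arctan (x i)} := by
  suffices {x : Fin n → ℝ | s ≤ ∑ i, arctan (x i)} =
      ⋂ t ∈ Set.Ioo (((n : ℝ) - 2) * (π / 2)) s, {x | t < ∑ i, arctan (x i)} by
    rw [this]
    exact convex_iInter₂ fun t ht => convex_setOf_lt_sum_arctan n ht.1
  ext x
  simp only [Set.mem_ofPred_eq, Set.mem_iInter, Set.mem_Ioo]
  refine ⟨fun hx t ht => ht.2.trans_le hx, fun hx => le_of_not_gt fun hlt => ?_⟩
  obtain ⟨t, ht, hts⟩ := exists_between (max_lt hs hlt)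
  exact (hx t ⟨(le_max_left _ _).trans_lt ht, hts⟩).not_ge ((le_max_right _ _).trans ht.le)

theorem diag_mul_diagonal_mul_star_mem_convexHull {n : Type*} [Fintype n] [DecidableEq n]
    {C : Matrix n n ℝ} (hC : C ∈ unitaryGroup n ℝ) (d : n → ℝ) :
    (C * diagonal d * star C).diag ∈
      convexHull ℝ (Set.range fun σ : Equiv.Perm n => d ∘ σ) := by
  set S : Matrix n n ℝ := of fun i j => C i j ^ 2
  have hS : S ∈ doublyStochastic ℝ n := by
    refine mem_doublyStochastic_iff_sum.mpr ⟨fun i j => sq_nonneg _, fun i => ?_, fun j => ?_⟩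
    · simpa [S, mul_apply, sq] using congrFun₂ (mem_unitaryGroup_iff.mp hC) i i
    · simpa [S, mul_apply, sq] using congrFun₂ (mem_unitaryGroup_iff'.mp hC) j j
  have hdiag : (C * diagonal d * star C).diag = S *ᵥ d := by
    ext i
    simp only [diag_apply, mul_apply (M := C * _), mul_diagonal, star_apply, star_trivial, mulVec,
      dotProduct, S, of_apply]
    exact sum_congr rfl fun j _ => by ring
  rw [← SetLike.mem_coe, doublyStochastic_eq_convexHull_permMatrix] at hS
  have := Set.mem_image_of_mem ((mulVecBilin ℝ ℝ).flip d) hS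
  rw [LinearMap.image_convexHull] at this
  rw [hdiag]
  refine convexHull_mono ?_ this
  rintro _ ⟨_, ⟨σ, rfl⟩, rfl⟩
  exact ⟨σ, by simp [permMatrix_mulVec]⟩

theorem Matrix.IsHermitian.diag_mul_mul_star_mem_convexHull {n : Type*} [Fintype n]
    [DecidableEq n] {A W : Matrix n n ℝ} (hA : A.IsHermitian) (hW : W ∈ unitaryGroup n ℝ) :
    (W * A * star W).diag ∈
      convexHull ℝ (Set.range fun σ : Equiv.Perm n => hA.eigenvalues ∘ σ) := by
  set U : Matrix n n ℝ := (hA.eigenvectorUnitary : Matrix n n ℝ)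
  have hconj : W * A * star W = W * U * diagonal hA.eigenvalues * star (W * U) := by
    conv_lhs => rw [hA.spectral_theorem]
    simp [Unitary.conjStarAlgAut_apply, star_mul, mul_assoc, U]
  rw [hconj]
  exact diag_mul_diagonal_mul_star_mem_convexHull
    (Submonoid.mul_mem _ hW hA.eigenvectorUnitary.2) _

theorem exists_mem_unitaryGroup_diag_mul_mul_star_eq_snoc {m : ℕ}
    {H : Matrix (Fin (m + 1)) (Fin (m + 1)) ℝ}
    (hsub : (H.submatrix Fin.castSucc Fin.castSucc).IsHermitian) :
    ∃ W ∈ unitaryGroup (Fin (m + 1)) ℝ,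
      (W * H * star W).diag = Fin.snoc hsub.eigenvalues (H (Fin.last m) (Fin.last m)) := by
  set V : Matrix (Fin m) (Fin m) ℝ := (hsub.eigenvectorUnitary : Matrix (Fin m) (Fin m) ℝ)
  have hV : star V * V = 1 := mem_unitaryGroup_iff'.mp hsub.eigenvectorUnitary.2
  have hdiag : star V * H.submatrix Fin.castSucc Fin.castSucc * V = diagonal hsub.eigenvalues := by
    simpa [Unitary.conjStarAlgAut_apply] using hsub.conjStarAlgAut_star_eigenvectorUnitary
  have hVt : (star V)ᵀ = V := by simp [star_eq_conjTranspose]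
  let e : Fin m ⊕ Fin 1 ≃ Fin (m + 1) := finSumFinEquiv
  set F : Matrix (Fin m ⊕ Fin 1) (Fin m ⊕ Fin 1) ℝ := fromBlocks (star V) 0 0 1
  have hstar : star (F.submatrix e.symm e.symm) = (star F).submatrix e.symm e.symm :=
    conjTranspose_submatrix _ _ _
  refine ⟨F.submatrix e.symm e.symm, mem_unitaryGroup_iff.mpr ?_, ?_⟩
  · rw [hstar, submatrix_mul_equiv _ _ _ e.symm, star_eq_conjTranspose, fromBlocks_conjTranspose]
    simp [F, fromBlocks_multiply, hVt, hV]
  · have hconj : F.submatrix e.symm e.symm * H * star (F.submatrix e.symm e.symm) =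
        (F * H.submatrix e e * star F).submatrix e.symm e.symm := by
      rw [hstar, ← submatrix_mul_equiv _ _ _ e.symm, ← submatrix_mul_equiv _ _ _ e.symm]
      simp
    rw [hconj, ← fromBlocks_toBlocks (H.submatrix e e), star_eq_conjTranspose,
      fromBlocks_conjTranspose, fromBlocks_multiply, fromBlocks_multiply]
    have h11 : (H.submatrix e e).toBlocks₁₁ = H.submatrix Fin.castSucc Fin.castSucc := rfl
    have h22 : (H.submatrix e e).toBlocks₂₂ 0 0 = H (Fin.last m) (Fin.last m) := rfl
    funext i
    refine Fin.lastCases ?_ (fun α => ?_) i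
    · simp [e, h22]
    · simp [e, h11, hVt, hdiag]

theorem le_sum_arctan_of_mem_convexHull_perm {n : ℕ} {l x : Fin n → ℝ}
    (hl : ((n : ℝ) - 2) * (π / 2) < ∑ i, arctan (l i))
    (hx : x ∈ convexHull ℝ (Set.range fun σ : Equiv.Perm (Fin n) => l ∘ σ)) :
    ∑ i, arctan (l i) ≤ ∑ i, arctan (x i) := by
  refine convexHull_min ?_ (convex_setOf_le_sum_arctan n hl) hx
  rintro _ ⟨σ, rfl⟩
  exact (Equiv.sum_comp σ fun i => arctan (l i)).ge

theorem stmt14_general (m : ℕ) (H : Matrix (Fin (m + 1)) (Fin (m + 1)) ℝ)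
    (hH : H.IsHermitian)
    (hsub : (H.submatrix Fin.castSucc Fin.castSucc).IsHermitian)
    (h : ℝ) (h1 : ((m : ℝ) + 1 - 2) * (π / 2) < h)
    (hsum : h ≤ ∑ i, Real.arctan (hH.eigenvalues i)) :
    (∑ i, Real.arctan (hH.eigenvalues i)) - Real.arctan (H (Fin.last m) (Fin.last m))
      ≤ ∑ α, Real.arctan (hsub.eigenvalues α) := by
  obtain ⟨W, hW, hdiag⟩ := exists_mem_unitaryGroup_diag_mul_mul_star_eq_snoc hsub
  have hmem := hH.diag_mul_mul_star_mem_convexHull hW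
  rw [hdiag] at hmem
  have := le_sum_arctan_of_mem_convexHull_perm (by push_cast; linarith) hmem
  simp only [Fin.sum_univ_castSucc, Fin.snoc_castSucc, Fin.snoc_last] at this ⊢
  linarith

theorem stmt14 (m : ℕ) (H : Matrix (Fin (m + 1)) (Fin (m + 1)) ℝ)
    (hH : H.IsHermitian)
    (hsub : (H.submatrix Fin.castSucc Fin.castSucc).IsHermitian)
    (h : ℝ) (h1 : ((m : ℝ) + 1 - 2) * (π / 2) < h) (h2 : h < ((m : ℝ) + 1) * (π / 2))
    (hsum : h ≤ ∑ i, Real.arctan (hH.eigenvalues i)) :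
    (∑ i, Real.arctan (hH.eigenvalues i)) - Real.arctan (H (Fin.last m) (Fin.last m))
      ≤ ∑ α, Real.arctan (hsub.eigenvalues α) :=
  stmt14_general m H hH hsub h h1 hsum
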